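/- arXiv:1505.02918 — 3 statements merged into one kernel-verified Lean document; each statement's English description precedes it below -/
import Mathlib

section
/- Let L₀ : ℝⁿ → ℝ be C², bounded below by D, and let β be as in the smooth convexification (β(z)=0 for z ≤ 0, β(z) > z² - 1 and β', β'' > 0 for z > 0). Fix R > 0, μ ≥ 1, and a C^∞ cutoff α : ℝⁿ → [0,1] with α(v) = 1 for |v| ≤ R+1 and α(v) = 0 for |v| > R+2. Then the function L_R(v) := α(v) L₀(v) + μ β(|v|² - R²) is superlinear: for every A > 0 there exists C_A > 0, independent of R, such that L_R(v) ≥ A|v| - C_A for all v, provided L₀ itself satisfies L₀(v) ≥ A|v| - C_A for all v. -/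
open Set

/-- Superlinearity of the modified Lagrangian with constants independent of `R`:
if `L₀` is `C²`, bounded below by `D` and satisfies `L₀(v) ≥ A‖v‖ - C_A`, then
for the cutoff/convexified modification `L_R(v) = α(v) L₀(v) + μ β(‖v‖² - R²)`
there is `C' > 0`, independent of `R`, `μ` and the cutoff `α`, such that
`L_R(v) ≥ A‖v‖ - C'` for all `v`. -/
theorem modified_lagrangian_superlinear
    {n : ℕ} (L₀ : EuclideanSpace ℝ (Fin n) → ℝ) (hL₀ : ContDiff ℝ 2 L₀)
    (D : ℝ) (hDneg : D < 0) (hD : ∀ v, D ≤ L₀ v)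
    (β : ℝ → ℝ) (hβsmooth : ContDiff ℝ (⊤ : ℕ∞) β)
    (hβ0 : ∀ z : ℝ, z ≤ 0 → β z = 0)
    (hβgt : ∀ z : ℝ, 0 < z → β z > z ^ 2 - 1)
    (hβ' : ∀ z : ℝ, 0 < z → 0 < deriv β z)
    (hβ'' : ∀ z : ℝ, 0 < z → 0 < deriv (deriv β) z)
    (A C_A : ℝ) (hA : 0 < A) (hCA : 0 < C_A)
    (hsl : ∀ v, L₀ v ≥ A * ‖v‖ - C_A) :
    ∃ C' : ℝ, 0 < C' ∧
      ∀ R : ℝ, 0 < R → ∀ μ : ℝ, 1 ≤ μ →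
        ∀ α : EuclideanSpace ℝ (Fin n) → ℝ, ContDiff ℝ (⊤ : ℕ∞) α →
          (∀ v, α v ∈ Icc (0:ℝ) 1) →
          (∀ v, ‖v‖ ≤ R + 1 → α v = 1) →
          (∀ v, ‖v‖ > R + 2 → α v = 0) →
          ∀ v, α v * L₀ v + μ * β (‖v‖ ^ 2 - R ^ 2) ≥ A * ‖v‖ - C' := by
  have hβnn : ∀ z : ℝ, 0 ≤ β z := by
    intro z
    rcases le_or_gt z 0 with hz | hz
    · rw [hβ0 z hz]
    · have hmono : StrictMonoOn β (Ici (0:ℝ)) := by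
        apply strictMonoOn_of_deriv_pos (convex_Ici 0) hβsmooth.continuous.continuousOn
        intro x hx
        exact hβ' x (by simpa [interior_Ici] using hx)
      have := hmono (self_mem_Ici) (mem_Ici.2 hz.le) hz
      rw [hβ0 0 le_rfl] at this
      exact this.le
  refine ⟨C_A + A ^ 2 / 16 + 2 * A - D + 1, by nlinarith, ?_⟩
  intro R hR μ hμ α hα hα01 hα1 hα0 v
  set t := ‖v‖ with hT
  have ht : 0 ≤ t := norm_nonneg v
  have hμ0 : (0:ℝ) < μ := lt_of_lt_of_le one_pos hμ
  have hbnn := hβnn (t ^ 2 - R ^ 2)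
  by_cases h1 : t ≤ R + 1
  · rw [hα1 v h1]
    have hs := hsl v
    nlinarith [mul_nonneg (le_trans zero_le_one hμ) hbnn]
  · push_neg at h1
    have hαL : D ≤ α v * L₀ v := by
      have h01 := hα01 v
      nlinarith [mul_nonneg h01.1 (sub_nonneg.2 (hD v)),
        mul_nonneg (sub_nonneg.2 h01.2) (neg_nonneg.2 hDneg.le)]
    have hμβ : β (t ^ 2 - R ^ 2) ≤ μ * β (t ^ 2 - R ^ 2) := by
      nlinarith [mul_nonneg (sub_nonneg.2 hμ) hbnn]
    by_cases h2 : t ≤ R + 2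
    · have hz : 2 * R + 1 < t ^ 2 - R ^ 2 := by nlinarith
      have hz0 : 0 < t ^ 2 - R ^ 2 := by nlinarith
      have hβz := hβgt _ hz0
      have hz2 : (2 * R + 1) ^ 2 < (t ^ 2 - R ^ 2) ^ 2 := by nlinarith
      nlinarith [sq_nonneg (2 * R - A / 4)]
    · push_neg at h2
      rw [hα0 v h2]
      have hz : 2 * t ≤ t ^ 2 - R ^ 2 := by
        nlinarith [mul_nonneg (sub_nonneg.2 h2.le) (add_nonneg ht hR.le)]
      have hz0 : 0 < t ^ 2 - R ^ 2 := by nlinarith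
      have hβz := hβgt _ hz0
      have hz2 : 4 * t ^ 2 ≤ (t ^ 2 - R ^ 2) ^ 2 := by
        nlinarith [sq_nonneg (t ^ 2 - R ^ 2 - 2 * t), mul_nonneg ht (sub_nonneg.2 hz)]
      nlinarith [sq_nonneg (2 * t - A / 4)]
end

section
/- With the same setup, equality S(γ(b), b) - S(γ(a), a) = ∫_a^b L(γ(τ), S(γ(τ),τ), γ'(τ)) dτ holds if and only if for almost every τ, γ'(τ) = ∂H/∂p(γ(τ), S(γ(τ),τ), ∂_x S(γ(τ),τ)), i.e. γ is a trajectory of the Lagrangian gradient vector field grad_L S. -/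
set_option maxHeartbeats 1000000


open MeasureTheory Set

section Aux

variable {E : Type*} [NormedAddCommGroup E] [NormedSpace ℝ E]

/-- Integrability of `τ ↦ T τ (γ' τ, 1)` for a continuous family of linear maps `T`
and an interval-integrable `γ'`. -/
lemma aux_intervalIntegrable_clm {a b : ℝ} (hab : a ≤ b)
    (T : ℝ → (E × ℝ) →L[ℝ] ℝ) (hT : ContinuousOn T (Icc a b))
    (γ' : ℝ → E) (hγ'int : IntervalIntegrable γ' volume a b) :
    IntervalIntegrable (fun τ => T τ (γ' τ, 1)) volume a b := by
  obtain ⟨M, hM⟩ := isCompact_Icc.exists_bound_of_continuousOn hT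
  have hM0 : 0 ≤ M := le_trans (norm_nonneg _) (hM a (left_mem_Icc.2 hab))
  have hγ'Ioc : IntegrableOn γ' (Ioc a b) volume :=
    (intervalIntegrable_iff_integrableOn_Ioc_of_le hab).1 hγ'int
  rw [intervalIntegrable_iff_integrableOn_Ioc_of_le hab]
  have hTm : AEStronglyMeasurable T (volume.restrict (Ioc a b)) :=
    (hT.mono Ioc_subset_Icc_self).aestronglyMeasurable_of_isSeparable measurableSet_Ioc
      (TopologicalSpace.IsSeparable.of_separableSpace _)
  have hmeas : AEStronglyMeasurable (fun τ => T τ (γ' τ, 1))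
      (volume.restrict (Ioc a b)) :=
    (isBoundedBilinearMap_apply (𝕜 := ℝ) (E := E × ℝ) (F := ℝ)).continuous.comp_aestronglyMeasurable
      (hTm.prodMk (hγ'Ioc.aestronglyMeasurable.prodMk aestronglyMeasurable_const))
  refine Integrable.mono (g := fun τ => M * (‖γ' τ‖ + 1))
      ((hγ'Ioc.norm.add (integrableOn_const measure_Ioc_lt_top.ne)).const_mul M)
      hmeas ?_
  filter_upwards [ae_restrict_mem measurableSet_Ioc] with τ hτ
  have h1 : ‖((γ' τ, (1:ℝ)) : E × ℝ)‖ ≤ ‖γ' τ‖ + 1 := by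
    rw [Prod.norm_def]
    exact max_le (le_add_of_nonneg_right zero_le_one)
      (by rw [norm_one]; linarith [norm_nonneg (γ' τ)])
  calc ‖T τ (γ' τ, 1)‖ ≤ ‖T τ‖ * ‖((γ' τ, (1:ℝ)) : E × ℝ)‖ := (T τ).le_opNorm _
    _ ≤ M * (‖γ' τ‖ + 1) :=
        mul_le_mul (hM τ (Ioc_subset_Icc_self hτ)) h1 (norm_nonneg _) hM0
    _ ≤ ‖M * (‖γ' τ‖ + 1)‖ := le_abs_self _

/-- Fundamental theorem of calculus along an absolutely continuous curve, for a `C¹`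
function `S` on an open set containing the curve. -/
lemma ftc_along_curve [ProperSpace E]
    (Ω : Set (E × ℝ)) (hΩ : IsOpen Ω)
    (S : E × ℝ → ℝ) (S' : E × ℝ → (E × ℝ) →L[ℝ] ℝ)
    (hS : ∀ z ∈ Ω, HasFDerivAt S (S' z) z) (hS'cont : ContinuousOn S' Ω)
    {a b : ℝ} (hab : a ≤ b)
    (γ γ' : ℝ → E) (hγ'int : IntervalIntegrable γ' volume a b)
    (hAC : ∀ s ∈ Icc a b, γ s = γ a + ∫ τ in a..s, γ' τ)
    (hmem : ∀ τ ∈ Icc a b, (γ τ, τ) ∈ Ω) :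
    S (γ b, b) - S (γ a, a) = ∫ τ in a..b, S' (γ τ, τ) (γ' τ, 1) := by
  have hγ'Ioc : IntegrableOn γ' (Ioc a b) volume :=
    (intervalIntegrable_iff_integrableOn_Ioc_of_le hab).1 hγ'int
  -- continuity of the curve
  have hγcont : ContinuousOn γ (Icc a b) := by
    have h0 : IntegrableOn γ' (uIcc a b) volume := by
      rw [uIcc_of_le hab]
      exact (intervalIntegrable_iff_integrableOn_Icc_of_le hab).1 hγ'int
    have h1 : ContinuousOn (fun s => γ a + ∫ τ in a..s, γ' τ) (Icc a b) := by
      apply continuousOn_const.add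
      have := intervalIntegral.continuousOn_primitive_interval (μ := volume) h0
      rwa [uIcc_of_le hab] at this
    exact h1.congr (fun s hs => hAC s hs)
  have hcurve : ContinuousOn (fun τ => ((γ τ, τ) : E × ℝ)) (Icc a b) :=
    hγcont.prodMk continuousOn_id
  -- compact neighbourhood of the curve inside Ω
  set K : Set (E × ℝ) := (fun τ => ((γ τ, τ) : E × ℝ)) '' Icc a b with hKdef
  have hK : IsCompact K := isCompact_Icc.image_of_continuousOn hcurve
  have hKΩ : K ⊆ Ω := by
    rintro z ⟨τ, hτ, rfl⟩; exact hmem τ hτ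
  obtain ⟨δ, δpos, hδ⟩ := hK.exists_cthickening_subset_open hΩ hKΩ
  set K' : Set (E × ℝ) := Metric.cthickening δ K with hK'def
  have hK'cpt : IsCompact K' := hK.cthickening
  have hKK' : K ⊆ K' := Metric.self_subset_cthickening K
  have hS'K : ContinuousOn S' K' := hS'cont.mono hδ
  obtain ⟨M, hM⟩ := hK'cpt.exists_bound_of_continuousOn hS'K
  have hM0 : 0 ≤ M :=
    le_trans (norm_nonneg _) (hM _ (hKK' ⟨a, left_mem_Icc.2 hab, rfl⟩))
  have hUC := hK'cpt.uniformContinuousOn_of_continuous hS'K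
  rw [Metric.uniformContinuousOn_iff] at hUC
  -- integrability of the target integrand
  have hTcont : ContinuousOn (fun τ => S' (γ τ, τ)) (Icc a b) :=
    hS'cont.comp hcurve (fun τ hτ => hmem τ hτ)
  have hBint : IntervalIntegrable (fun τ => S' (γ τ, τ) (γ' τ, 1)) volume a b :=
    aux_intervalIntegrable_clm hab _ hTcont γ' hγ'int
  -- we prove equality by an ε-approximation argument
  apply eq_of_forall_dist_le
  intro ε hε
  set C₁ : ℝ := ∫ τ in a..b, ‖γ' τ‖ with hC₁def
  have hC₁ : 0 ≤ C₁ := intervalIntegral.integral_nonneg hab (fun _ _ => norm_nonneg _)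
  set D : ℝ := C₁ + (b - a) with hDdef
  have hD : 0 ≤ D := add_nonneg hC₁ (sub_nonneg.2 hab)
  set ε₂ : ℝ := ε / (2 * (D + 1)) with hε₂def
  have hε₂pos : 0 < ε₂ := by positivity
  obtain ⟨η, ηpos, hη⟩ := hUC ε₂ hε₂pos
  set εA : ℝ := min δ (min (η / 2) (ε / (4 * (M + 1)))) with hεAdef
  have hεApos : 0 < εA := lt_min δpos (lt_min (by positivity) (by positivity))
  have hεAδ : εA ≤ δ := min_le_left _ _
  have hεAη : εA < η :=
    lt_of_le_of_lt ((min_le_right _ _).trans (min_le_left _ _)) (half_lt_self ηpos)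
  have hεAε : εA ≤ ε / (4 * (M + 1)) := (min_le_right _ _).trans (min_le_right _ _)
  -- approximate γ' in L¹ by a continuous function g
  set f0 : ℝ → E := (Ioc a b).indicator γ' with hf0def
  have hf0 : Integrable f0 volume := hγ'Ioc.integrable_indicator measurableSet_Ioc
  obtain ⟨g, -, hg_close, hg_cont, hg_int⟩ :=
    hf0.exists_hasCompactSupport_integral_sub_le hεApos
  have hclose : ∫ τ in Ioc a b, ‖γ' τ - g τ‖ ≤ εA := by
    have h1 : ∫ τ in Ioc a b, ‖γ' τ - g τ‖ = ∫ τ in Ioc a b, ‖f0 τ - g τ‖ := by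
      apply setIntegral_congr_fun measurableSet_Ioc
      intro τ hτ
      simp [hf0def, indicator_of_mem hτ]
    have h2 : ∫ τ in Ioc a b, ‖f0 τ - g τ‖ ≤ ∫ τ, ‖f0 τ - g τ‖ :=
      setIntegral_le_integral (hf0.sub hg_int).norm
        (Filter.Eventually.of_forall fun τ => norm_nonneg _)
    linarith
  -- the approximating C¹ curve
  set γt : ℝ → E := fun s => γ a + ∫ τ in a..s, g τ with hγtdef
  have hγt_deriv : ∀ s, HasDerivAt γt (g s) s := fun s =>
    ((hg_cont.integral_hasStrictDerivAt a s).hasDerivAt).const_add (γ a)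
  have hγta : γt a = γ a := by simp [hγtdef]
  have hγtcont : Continuous γt :=
    continuous_iff_continuousAt.2 fun s => (hγt_deriv s).continuousAt
  have hdist : ∀ s ∈ Icc a b, ‖γ s - γt s‖ ≤ εA := by
    intro s hs
    have hss : uIcc a s ⊆ uIcc a b := by
      rw [uIcc_of_le hs.1, uIcc_of_le hab]
      exact Icc_subset_Icc_right hs.2
    have hsub : γ s - γt s = ∫ τ in a..s, (γ' τ - g τ) := by
      rw [hAC s hs, hγtdef]
      simp only [add_sub_add_left_eq_sub]
      rw [intervalIntegral.integral_sub (hγ'int.mono_set hss)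
        (hg_cont.intervalIntegrable a s)]
    calc ‖γ s - γt s‖ = ‖∫ τ in a..s, (γ' τ - g τ)‖ := by rw [hsub]
      _ ≤ ∫ τ in a..s, ‖γ' τ - g τ‖ := intervalIntegral.norm_integral_le_integral_norm hs.1
      _ = ∫ τ in Ioc a s, ‖γ' τ - g τ‖ := intervalIntegral.integral_of_le hs.1
      _ ≤ ∫ τ in Ioc a b, ‖γ' τ - g τ‖ := by
          apply setIntegral_mono_set ((hγ'Ioc.sub hg_int.integrableOn).norm)
            (Filter.Eventually.of_forall fun τ => norm_nonneg _)
          exact HasSubset.Subset.eventuallyLE (Ioc_subset_Ioc_right hs.2)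
      _ ≤ εA := hclose
  have hdistP : ∀ s ∈ Icc a b, dist ((γt s, s) : E × ℝ) ((γ s, s) : E × ℝ) ≤ εA := by
    intro s hs
    have h1 : dist ((γt s, s) : E × ℝ) ((γ s, s) : E × ℝ) = dist (γt s) (γ s) := by
      rw [Prod.dist_eq, dist_self]
      exact max_eq_left dist_nonneg
    rw [h1, dist_eq_norm, norm_sub_rev]
    exact hdist s hs
  have hmemt : ∀ s ∈ Icc a b, ((γt s, s) : E × ℝ) ∈ K' := by
    intro s hs
    exact Metric.mem_cthickening_of_dist_le _ _ δ K ⟨s, hs, rfl⟩ ((hdistP s hs).trans hεAδ)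
  have hmemtΩ : ∀ s ∈ Icc a b, ((γt s, s) : E × ℝ) ∈ Ω := fun s hs => hδ (hmemt s hs)
  -- FTC for the smooth approximating curve
  have hAcont : ContinuousOn (fun τ => S' (γt τ, τ) (g τ, 1)) (Icc a b) := by
    apply ContinuousOn.clm_apply
    · exact hS'cont.comp ((hγtcont.continuousOn).prodMk continuousOn_id)
        (fun s hs => hmemtΩ s hs)
    · exact (hg_cont.continuousOn).prodMk continuousOn_const
  have hAint : IntervalIntegrable (fun τ => S' (γt τ, τ) (g τ, 1)) volume a b := by
    apply ContinuousOn.intervalIntegrable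
    rwa [uIcc_of_le hab]
  have hFTC : ∫ τ in a..b, S' (γt τ, τ) (g τ, 1) = S (γt b, b) - S (γt a, a) := by
    apply intervalIntegral.integral_eq_sub_of_hasDerivAt_of_le hab
    · intro s hs
      have h1 : ContinuousAt (fun τ : ℝ => ((γt τ, τ) : E × ℝ)) s :=
        (hγtcont.prodMk continuous_id).continuousAt
      have h2 : ContinuousAt (fun τ : ℝ => S (γt τ, τ)) s :=
        ContinuousAt.comp (g := S) (f := fun τ : ℝ => ((γt τ, τ) : E × ℝ))
          ((hS _ (hmemtΩ s hs)).continuousAt) h1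
      exact h2.continuousWithinAt
    · intro s hs
      have h1 : HasDerivAt (fun τ => ((γt τ, τ) : E × ℝ)) (g s, 1) s :=
        (hγt_deriv s).prodMk (hasDerivAt_id s)
      have h2 : HasDerivAt (fun τ : ℝ => S (γt τ, τ)) (S' (γt s, s) (g s, 1)) s :=
        HasFDerivAt.comp_hasDerivAt (l := S) (f := fun τ : ℝ => ((γt τ, τ) : E × ℝ)) s
          (hS _ (hmemtΩ s (Ioo_subset_Icc_self hs))) h1
      exact h2
    · exact hAint
  -- first error estimate: endpoints
  have hE1 : ‖S (γ b, b) - S (γt b, b)‖ ≤ M * εA := by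
    have hb : b ∈ Icc a b := right_mem_Icc.2 hab
    have hball : Metric.closedBall ((γ b, b) : E × ℝ) δ ⊆ K' := fun z hz =>
      Metric.mem_cthickening_of_dist_le z _ δ K ⟨b, hb, rfl⟩ (Metric.mem_closedBall.1 hz)
    have hmvt := Convex.norm_image_sub_le_of_norm_hasFDerivWithin_le
      (f := S) (f' := S') (s := Metric.closedBall ((γ b, b) : E × ℝ) δ)
      (fun z hz => (hS z (hδ (hball hz))).hasFDerivWithinAt)
      (fun z hz => hM z (hball hz)) (convex_closedBall _ _)
      (x := ((γt b, b) : E × ℝ)) (y := ((γ b, b) : E × ℝ))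
      (by
        rw [Metric.mem_closedBall]
        exact (hdistP b hb).trans hεAδ)
      (Metric.mem_closedBall_self δpos.le)
    have hnorm : ‖((γ b, b) : E × ℝ) - ((γt b, b) : E × ℝ)‖ = ‖γ b - γt b‖ := by
      have h2 : ((γ b, b) : E × ℝ) - ((γt b, b) : E × ℝ) = (γ b - γt b, 0) := by
        simp [Prod.mk_sub_mk]
      rw [h2, Prod.norm_def]
      simp only [norm_zero]
      exact max_eq_left (norm_nonneg _)
    calc ‖S (γ b, b) - S (γt b, b)‖
        ≤ M * ‖((γ b, b) : E × ℝ) - ((γt b, b) : E × ℝ)‖ := hmvt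
      _ = M * ‖γ b - γt b‖ := by rw [hnorm]
      _ ≤ M * εA := mul_le_mul_of_nonneg_left (hdist b hb) hM0
  -- second error estimate: the integrals
  have hpt : ∀ τ ∈ Icc a b,
      ‖S' (γt τ, τ) (g τ, 1) - S' (γ τ, τ) (γ' τ, 1)‖
        ≤ (M + 1) * ‖g τ - γ' τ‖ + ε₂ * (‖γ' τ‖ + 1) := by
    intro τ hτ
    have hzK : ((γ τ, τ) : E × ℝ) ∈ K' := hKK' ⟨τ, hτ, rfl⟩
    have hztK : ((γt τ, τ) : E × ℝ) ∈ K' := hmemt τ hτ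
    have hdd : dist ((γt τ, τ) : E × ℝ) ((γ τ, τ) : E × ℝ) < η :=
      lt_of_le_of_lt (hdistP τ hτ) hεAη
    have hS'close : ‖S' (γt τ, τ) - S' (γ τ, τ)‖ < ε₂ := by
      have := hη _ hztK _ hzK hdd
      rwa [dist_eq_norm] at this
    have hsplit : S' (γt τ, τ) (g τ, 1) - S' (γ τ, τ) (γ' τ, 1)
        = S' (γt τ, τ) ((g τ - γ' τ, 0) : E × ℝ)
          + (S' (γt τ, τ) - S' (γ τ, τ)) (γ' τ, 1) := by
      have e : ((g τ, (1:ℝ)) : E × ℝ) - ((γ' τ, (1:ℝ)) : E × ℝ) = (g τ - γ' τ, 0) := by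
        simp [Prod.mk_sub_mk]
      rw [ContinuousLinearMap.sub_apply, ← e, map_sub]
      ring
    have h1 : ‖S' (γt τ, τ) ((g τ - γ' τ, 0) : E × ℝ)‖ ≤ M * ‖g τ - γ' τ‖ := by
      have hn : ‖((g τ - γ' τ, (0:ℝ)) : E × ℝ)‖ = ‖g τ - γ' τ‖ := by
        rw [Prod.norm_def]
        simp only [norm_zero]
        exact max_eq_left (norm_nonneg _)
      calc ‖S' (γt τ, τ) ((g τ - γ' τ, 0) : E × ℝ)‖
          ≤ ‖S' (γt τ, τ)‖ * ‖((g τ - γ' τ, (0:ℝ)) : E × ℝ)‖ :=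
            (S' (γt τ, τ)).le_opNorm _
        _ ≤ M * ‖g τ - γ' τ‖ := by
            rw [hn]
            exact mul_le_mul_of_nonneg_right (hM _ hztK) (norm_nonneg _)
    have h2 : ‖(S' (γt τ, τ) - S' (γ τ, τ)) ((γ' τ, 1) : E × ℝ)‖ ≤ ε₂ * (‖γ' τ‖ + 1) := by
      have hn : ‖((γ' τ, (1:ℝ)) : E × ℝ)‖ ≤ ‖γ' τ‖ + 1 := by
        rw [Prod.norm_def]
        exact max_le (le_add_of_nonneg_right zero_le_one)
          (by rw [norm_one]; linarith [norm_nonneg (γ' τ)])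
      calc ‖(S' (γt τ, τ) - S' (γ τ, τ)) ((γ' τ, 1) : E × ℝ)‖
          ≤ ‖S' (γt τ, τ) - S' (γ τ, τ)‖ * ‖((γ' τ, (1:ℝ)) : E × ℝ)‖ :=
            ContinuousLinearMap.le_opNorm _ _
        _ ≤ ε₂ * (‖γ' τ‖ + 1) :=
            mul_le_mul hS'close.le hn (norm_nonneg _) hε₂pos.le
    calc ‖S' (γt τ, τ) (g τ, 1) - S' (γ τ, τ) (γ' τ, 1)‖
        ≤ ‖S' (γt τ, τ) ((g τ - γ' τ, 0) : E × ℝ)‖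
          + ‖(S' (γt τ, τ) - S' (γ τ, τ)) ((γ' τ, 1) : E × ℝ)‖ := by
          rw [hsplit]; exact norm_add_le _ _
      _ ≤ M * ‖g τ - γ' τ‖ + ε₂ * (‖γ' τ‖ + 1) := add_le_add h1 h2
      _ ≤ (M + 1) * ‖g τ - γ' τ‖ + ε₂ * (‖γ' τ‖ + 1) := by
          have := norm_nonneg (g τ - γ' τ); nlinarith
  have hboundint : IntervalIntegrable
      (fun τ => (M + 1) * ‖g τ - γ' τ‖ + ε₂ * (‖γ' τ‖ + 1)) volume a b := by
    apply IntervalIntegrable.add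
    · exact (((hg_cont.intervalIntegrable a b).sub hγ'int).norm).const_mul (M + 1)
    · exact ((hγ'int.norm.add (intervalIntegrable_const)).const_mul ε₂)
  have hgsub : ∫ τ in a..b, ‖g τ - γ' τ‖ ≤ εA := by
    have h1 : ∫ τ in a..b, ‖g τ - γ' τ‖ = ∫ τ in Ioc a b, ‖γ' τ - g τ‖ := by
      rw [intervalIntegral.integral_of_le hab]
      apply setIntegral_congr_fun measurableSet_Ioc
      intro τ _
      exact norm_sub_rev _ _
    linarith
  have hE2 : ‖(∫ τ in a..b, S' (γt τ, τ) (g τ, 1)) - ∫ τ in a..b, S' (γ τ, τ) (γ' τ, 1)‖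
      ≤ (M + 1) * εA + ε₂ * D := by
    have h1 : (∫ τ in a..b, S' (γt τ, τ) (g τ, 1)) - ∫ τ in a..b, S' (γ τ, τ) (γ' τ, 1)
        = ∫ τ in a..b, (S' (γt τ, τ) (g τ, 1) - S' (γ τ, τ) (γ' τ, 1)) :=
      (intervalIntegral.integral_sub hAint hBint).symm
    have h2 : ‖∫ τ in a..b, (S' (γt τ, τ) (g τ, 1) - S' (γ τ, τ) (γ' τ, 1))‖
        ≤ ∫ τ in a..b, ‖S' (γt τ, τ) (g τ, 1) - S' (γ τ, τ) (γ' τ, 1)‖ :=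
      intervalIntegral.norm_integral_le_integral_norm hab
    have h3 : ∫ τ in a..b, ‖S' (γt τ, τ) (g τ, 1) - S' (γ τ, τ) (γ' τ, 1)‖
        ≤ ∫ τ in a..b, ((M + 1) * ‖g τ - γ' τ‖ + ε₂ * (‖γ' τ‖ + 1)) :=
      intervalIntegral.integral_mono_on hab ((hAint.sub hBint).norm) hboundint hpt
    have h4 : ∫ τ in a..b, ((M + 1) * ‖g τ - γ' τ‖ + ε₂ * (‖γ' τ‖ + 1))
        = (M + 1) * (∫ τ in a..b, ‖g τ - γ' τ‖) + ε₂ * (C₁ + (b - a)) := by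
      rw [intervalIntegral.integral_add
        ((((hg_cont.intervalIntegrable a b).sub hγ'int).norm).const_mul (M + 1))
        (((hγ'int.norm.add (intervalIntegrable_const)).const_mul ε₂)),
        intervalIntegral.integral_const_mul, intervalIntegral.integral_const_mul,
        intervalIntegral.integral_add hγ'int.norm intervalIntegrable_const,
        intervalIntegral.integral_const]
      simp [hC₁def]
    have h5 : (M + 1) * (∫ τ in a..b, ‖g τ - γ' τ‖) ≤ (M + 1) * εA :=
      mul_le_mul_of_nonneg_left hgsub (by linarith)
    rw [h1]
    calc ‖∫ τ in a..b, (S' (γt τ, τ) (g τ, 1) - S' (γ τ, τ) (γ' τ, 1))‖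
        ≤ ∫ τ in a..b, ((M + 1) * ‖g τ - γ' τ‖ + ε₂ * (‖γ' τ‖ + 1)) := h2.trans h3
      _ = (M + 1) * (∫ τ in a..b, ‖g τ - γ' τ‖) + ε₂ * (C₁ + (b - a)) := h4
      _ ≤ (M + 1) * εA + ε₂ * D := by rw [hDdef]; linarith
  -- conclude
  have key1 : (M + 1) * εA ≤ ε / 4 := by
    have h := mul_le_mul_of_nonneg_left hεAε (by linarith : (0:ℝ) ≤ M + 1)
    have hMpos : (0:ℝ) < M + 1 := by linarith
    calc (M + 1) * εA ≤ (M + 1) * (ε / (4 * (M + 1))) := h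
      _ = ε / 4 := by field_simp
  have key2 : ε₂ * D ≤ ε / 2 := by
    have hD1 : (0:ℝ) < D + 1 := by linarith
    have h2 : ε₂ * (D + 1) = ε / 2 := by
      rw [hε₂def]; field_simp
    have h3 : ε₂ * D ≤ ε₂ * (D + 1) := by nlinarith [hε₂pos.le]
    linarith
  have hsum : dist (S (γ b, b) - S (γ a, a)) (∫ τ in a..b, S' (γ τ, τ) (γ' τ, 1)) ≤
      ‖S (γ b, b) - S (γt b, b)‖
      + ‖(∫ τ in a..b, S' (γt τ, τ) (g τ, 1)) - ∫ τ in a..b, S' (γ τ, τ) (γ' τ, 1)‖ := by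
    rw [Real.dist_eq]
    have hrw : S (γ b, b) - S (γ a, a) - ∫ τ in a..b, S' (γ τ, τ) (γ' τ, 1)
        = (S (γ b, b) - S (γt b, b))
          + ((∫ τ in a..b, S' (γt τ, τ) (g τ, 1)) - ∫ τ in a..b, S' (γ τ, τ) (γ' τ, 1)) := by
      rw [hFTC, hγta]; ring
    rw [hrw]
    exact abs_add_le _ _
  calc dist (S (γ b, b) - S (γ a, a)) (∫ τ in a..b, S' (γ τ, τ) (γ' τ, 1))
      ≤ ‖S (γ b, b) - S (γt b, b)‖
        + ‖(∫ τ in a..b, S' (γt τ, τ) (g τ, 1)) - ∫ τ in a..b, S' (γ τ, τ) (γ' τ, 1)‖ := hsum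
    _ ≤ M * εA + ((M + 1) * εA + ε₂ * D) := add_le_add hE1 hE2
    _ ≤ ε := by nlinarith [hεApos.le, hM0]

end Aux

/-- Equality in the Hamilton–Jacobi action inequality holds if and only if the
curve is (a.e.) a trajectory of the Lagrangian gradient vector field
`grad_L S (x, τ) = ∂H/∂p (x, S(x,τ), ∂ₓS(x,τ))`. -/
theorem hj_solution_action_equality_iff
    {n : ℕ}
    (H : EuclideanSpace ℝ (Fin n) → ℝ → EuclideanSpace ℝ (Fin n) → ℝ)
    (hHsmooth : ContDiff ℝ 2 fun z : (EuclideanSpace ℝ (Fin n)) × ℝ × (EuclideanSpace ℝ (Fin n)) => H z.1 z.2.1 z.2.2)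
    (L : EuclideanSpace ℝ (Fin n) → ℝ → EuclideanSpace ℝ (Fin n) → ℝ)
    (hL : ∀ x u v, IsLUB {r : ℝ | ∃ q, r = (inner ℝ v q : ℝ) - H x u q} (L x u v))
    (Hp : EuclideanSpace ℝ (Fin n) → ℝ → EuclideanSpace ℝ (Fin n) → EuclideanSpace ℝ (Fin n))
    (hHp : ∀ x u q, HasGradientAt (H x u) (Hp x u q) q)
    (hFenchelEq : ∀ x u q v,
      ((inner ℝ q v : ℝ) = H x u q + L x u v ↔ v = Hp x u q))
    (Ω : Set ((EuclideanSpace ℝ (Fin n)) × ℝ)) (hΩ : IsOpen Ω)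
    (S : (EuclideanSpace ℝ (Fin n)) × ℝ → ℝ)
    (S' : (EuclideanSpace ℝ (Fin n)) × ℝ → ((EuclideanSpace ℝ (Fin n)) × ℝ) →L[ℝ] ℝ)
    (hS : ∀ z ∈ Ω, HasFDerivAt S (S' z) z)
    (hS'cont : ContinuousOn S' Ω)
    (p : (EuclideanSpace ℝ (Fin n)) × ℝ → EuclideanSpace ℝ (Fin n))
    (hp : ∀ z ∈ Ω, ∀ v, (inner ℝ v (p z) : ℝ) = S' z (v, 0))
    (hHJ : ∀ z ∈ Ω, S' z (0, 1) + H z.1 (S z) (p z) = 0)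
    (a b : ℝ) (hab : a ≤ b)
    (γ γ' : ℝ → EuclideanSpace ℝ (Fin n))
    (hγ'int : IntervalIntegrable γ' volume a b)
    (hAC : ∀ s ∈ Icc a b, γ s = γ a + ∫ τ in a..s, γ' τ)
    (hmem : ∀ τ ∈ Icc a b, (γ τ, τ) ∈ Ω)
    (hLint : IntervalIntegrable (fun τ => L (γ τ) (S (γ τ, τ)) (γ' τ)) volume a b) :
    (S (γ b, b) - S (γ a, a) = ∫ τ in a..b, L (γ τ) (S (γ τ, τ)) (γ' τ)) ↔
      (∀ᵐ τ ∂(volume.restrict (Ioc a b)),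
        γ' τ = Hp (γ τ) (S (γ τ, τ)) (p (γ τ, τ))) := by
  classical
  -- key FTC along the curve
  have key := ftc_along_curve Ω hΩ S S' hS hS'cont hab γ γ' hγ'int hAC hmem
  -- the integrand of the FTC in terms of p and H
  have hEq : ∀ τ ∈ Icc a b,
      S' (γ τ, τ) (γ' τ, 1)
        = (inner ℝ (γ' τ) (p (γ τ, τ)) : ℝ) - H (γ τ) (S (γ τ, τ)) (p (γ τ, τ)) := by
    intro τ hτ
    have hz := hmem τ hτ
    have h1 : ((γ' τ, (1:ℝ)) : (EuclideanSpace ℝ (Fin n)) × ℝ) = (γ' τ, 0) + (0, 1) := by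
      simp [Prod.mk_add_mk]
    have h2 : S' (γ τ, τ) (γ' τ, 1)
        = S' (γ τ, τ) (γ' τ, 0) + S' (γ τ, τ) (0, 1) := by
      rw [h1, map_add]
    have h3 := hp _ hz (γ' τ)
    have h4 := hHJ _ hz
    rw [h2, ← h3]
    simp only at h4 ⊢
    linarith
  -- continuity of the curve (for integrability)
  have hγcont : ContinuousOn γ (Icc a b) := by
    have h0 : IntegrableOn γ' (uIcc a b) volume := by
      rw [uIcc_of_le hab]
      exact (intervalIntegrable_iff_integrableOn_Icc_of_le hab).1 hγ'int
    have h1 : ContinuousOn (fun s => γ a + ∫ τ in a..s, γ' τ) (Icc a b) := by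
      apply continuousOn_const.add
      have := intervalIntegral.continuousOn_primitive_interval (μ := volume) h0
      rwa [uIcc_of_le hab] at this
    exact h1.congr (fun s hs => hAC s hs)
  have hcurve : ContinuousOn (fun τ => ((γ τ, τ) : (EuclideanSpace ℝ (Fin n)) × ℝ)) (Icc a b) :=
    hγcont.prodMk continuousOn_id
  have hTcont : ContinuousOn (fun τ => S' (γ τ, τ)) (Icc a b) :=
    hS'cont.comp hcurve (fun τ hτ => hmem τ hτ)
  have hBint : IntervalIntegrable (fun τ => S' (γ τ, τ) (γ' τ, 1)) volume a b :=
    aux_intervalIntegrable_clm hab _ hTcont γ' hγ'int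
  -- Fenchel inequality: the integrand of the FTC is below L
  have hFen : ∀ τ ∈ Icc a b,
      S' (γ τ, τ) (γ' τ, 1) ≤ L (γ τ) (S (γ τ, τ)) (γ' τ) := by
    intro τ hτ
    rw [hEq τ hτ]
    exact (hL (γ τ) (S (γ τ, τ)) (γ' τ)).1 ⟨p (γ τ, τ), rfl⟩
  -- reduce both sides of the iff to vanishing of a nonnegative integral
  have hiff1 : (S (γ b, b) - S (γ a, a) = ∫ τ in a..b, L (γ τ) (S (γ τ, τ)) (γ' τ))
      ↔ (∫ τ in a..b, (L (γ τ) (S (γ τ, τ)) (γ' τ) - S' (γ τ, τ) (γ' τ, 1))) = 0 := by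
    rw [intervalIntegral.integral_sub hLint hBint, key]
    constructor <;> intro h <;> linarith
  have hφint : IntegrableOn
      (fun τ => L (γ τ) (S (γ τ, τ)) (γ' τ) - S' (γ τ, τ) (γ' τ, 1)) (Ioc a b) volume :=
    (intervalIntegrable_iff_integrableOn_Ioc_of_le hab).1 (hLint.sub hBint)
  have hφnn : 0 ≤ᵐ[volume.restrict (Ioc a b)]
      (fun τ => L (γ τ) (S (γ τ, τ)) (γ' τ) - S' (γ τ, τ) (γ' τ, 1)) := by
    filter_upwards [ae_restrict_mem measurableSet_Ioc] with τ hτ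
    have := hFen τ (Ioc_subset_Icc_self hτ)
    simp only [Pi.zero_apply]
    linarith
  have hiff2 : (∫ τ in a..b, (L (γ τ) (S (γ τ, τ)) (γ' τ) - S' (γ τ, τ) (γ' τ, 1))) = 0
      ↔ (fun τ => L (γ τ) (S (γ τ, τ)) (γ' τ) - S' (γ τ, τ) (γ' τ, 1))
          =ᵐ[volume.restrict (Ioc a b)] 0 := by
    rw [intervalIntegral.integral_of_le hab]
    exact integral_eq_zero_iff_of_nonneg_ae hφnn hφint
  rw [hiff1, hiff2]
  -- finally, translate the vanishing condition via the Fenchel equality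
  constructor
  · intro h
    filter_upwards [ae_restrict_mem measurableSet_Ioc, h] with τ hτ hτ0
    have hτI : τ ∈ Icc a b := Ioc_subset_Icc_self hτ
    have h1 : L (γ τ) (S (γ τ, τ)) (γ' τ) = S' (γ τ, τ) (γ' τ, 1) := by
      have := hτ0
      simp only [Pi.zero_apply] at this
      linarith
    have h2 : (inner ℝ (p (γ τ, τ)) (γ' τ) : ℝ)
        = H (γ τ) (S (γ τ, τ)) (p (γ τ, τ)) + L (γ τ) (S (γ τ, τ)) (γ' τ) := by
      rw [real_inner_comm]
      have := hEq τ hτI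
      rw [h1] at *
      linarith [hEq τ hτI]
    exact (hFenchelEq (γ τ) (S (γ τ, τ)) (p (γ τ, τ)) (γ' τ)).1 h2
  · intro h
    filter_upwards [ae_restrict_mem measurableSet_Ioc, h] with τ hτ hτ0
    have hτI : τ ∈ Icc a b := Ioc_subset_Icc_self hτ
    have h2 := (hFenchelEq (γ τ) (S (γ τ, τ)) (p (γ τ, τ)) (γ' τ)).2 hτ0
    rw [real_inner_comm] at h2
    have h3 := hEq τ hτI
    simp only [Pi.zero_apply]
    linarith
end

section
/- Let U : [0,t] → ℝ be C¹ with U'(s) = L(X(s), U(s), X'(s)) where L(x,u,v) ≥ -C₀ - λ|u| for all (x,u,v) (with C₀, λ > 0). If t ≤ 1/(2λ) and |U(t)| = K, then for any l > 2(1 + C₀/(2λK)) there is no s₀ ∈ [0,t] with U(s₀) ≥ lK; i.e., sup_{s∈[0,t]} U(s) < lK for l sufficiently large depending only on C₀, λ, K. -/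
open Set

set_option maxHeartbeats 1000000 in
/-- A priori upper bound on short time intervals: if `U' = L(X, U, X')` with
`L(x,u,v) ≥ -C₀ - λ|u|`, `t ≤ 1/(2λ)` and `|U(t)| = K`, then `U` never reaches
`lK` on `[0,t]` once `l > 2(1 + C₀/(2λK))`. -/
theorem short_time_upper_bound
    {n : ℕ} {M : Type*} [TopologicalSpace M] [CompactSpace M]
    (L : M → ℝ → (Fin n → ℝ) → ℝ)
    (C₀ lam : ℝ) (hC₀ : 0 < C₀) (hlam : 0 < lam)
    (hL : ∀ x u v, L x u v ≥ -C₀ - lam * |u|)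
    (t : ℝ) (ht : 0 < t) (htδ : t ≤ 1 / (2 * lam))
    (X : ℝ → M) (X' : ℝ → (Fin n → ℝ)) (U : ℝ → ℝ)
    (hU : ∀ s ∈ Icc (0:ℝ) t, HasDerivAt U (L (X s) (U s) (X' s)) s)
    (K : ℝ) (hK : 0 < K) (hUt : |U t| = K) :
    ∀ l : ℝ, l > 2 * (1 + C₀ / (2 * lam * K)) →
      ¬ ∃ s₀ ∈ Icc (0:ℝ) t, U s₀ ≥ l * K := by
  intro l hl ⟨s₀, hs₀, hUs₀⟩
  have hl2 : (2:ℝ) < l := by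
    have : 0 < C₀ / (2 * lam * K) := div_pos hC₀ (by positivity)
    nlinarith
  have hKlK : K < l * K := by nlinarith
  have hcont : ContinuousOn U (Icc 0 t) := fun s hs =>
    (hU s hs).continuousAt.continuousWithinAt
  have hUtK : U t ≤ K := hUt ▸ le_abs_self _
  have hs₀0 : (0:ℝ) ≤ s₀ := hs₀.1
  have hs₀t : s₀ ≤ t := hs₀.2
  -- s₂ : first time in [s₀, t] where U ≤ K
  set S₂ : Set ℝ := {s ∈ Icc s₀ t | U s ≤ K} with hS₂def
  have hS₂sub : Icc s₀ t ⊆ Icc (0:ℝ) t := Icc_subset_Icc hs₀0 le_rfl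
  have hS₂closed : IsClosed S₂ :=
    (hcont.mono hS₂sub).preimage_isClosed_of_isClosed isClosed_Icc isClosed_Iic
  have hS₂ne : S₂.Nonempty := ⟨t, ⟨⟨hs₀t, le_rfl⟩, hUtK⟩⟩
  have hS₂bdd : BddBelow S₂ := ⟨s₀, fun s hs => hs.1.1⟩
  set s₂ := sInf S₂ with hs₂def
  have hs₂mem : s₂ ∈ S₂ := hS₂closed.csInf_mem hS₂ne hS₂bdd
  have hs₂₀ : s₀ ≤ s₂ := hs₂mem.1.1
  have hs₂t : s₂ ≤ t := hs₂mem.1.2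
  have hUs₂ : U s₂ ≤ K := hs₂mem.2
  -- on [s₀, s₂), U > K
  have hgtK : ∀ s ∈ Ico s₀ s₂, K < U s := by
    intro s hs
    by_contra h
    exact absurd (csInf_le hS₂bdd ⟨⟨hs.1, hs.2.le.trans hs₂t⟩, le_of_not_gt h⟩)
      (not_le.mpr hs.2)
  -- s₁ : last time in [s₀, s₂] where U ≥ lK
  set S₁ : Set ℝ := {s ∈ Icc s₀ s₂ | l * K ≤ U s} with hS₁def
  have hS₁sub : Icc s₀ s₂ ⊆ Icc (0:ℝ) t := Icc_subset_Icc hs₀0 hs₂t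
  have hS₁closed : IsClosed S₁ :=
    (hcont.mono hS₁sub).preimage_isClosed_of_isClosed isClosed_Icc isClosed_Ici
  have hS₁ne : S₁.Nonempty := ⟨s₀, ⟨⟨le_rfl, hs₂₀⟩, hUs₀⟩⟩
  have hS₁bdd : BddAbove S₁ := ⟨s₂, fun s hs => hs.1.2⟩
  set s₁ := sSup S₁ with hs₁def
  have hs₁mem : s₁ ∈ S₁ := hS₁closed.csSup_mem hS₁ne hS₁bdd
  have hs₁₀ : s₀ ≤ s₁ := hs₁mem.1.1
  have hs₁₂ : s₁ ≤ s₂ := hs₁mem.1.2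
  have hUs₁ : l * K ≤ U s₁ := hs₁mem.2
  -- on (s₁, s₂], U ≤ lK
  have hlelK : ∀ s ∈ Ioc s₁ s₂, U s ≤ l * K := by
    intro s hs
    by_contra h
    push_neg at h
    have hsub' : Icc s s₂ ⊆ Icc (0:ℝ) t := by
      apply Icc_subset_Icc _ hs₂t
      exact hs₀0.trans (hs₁₀.trans hs.1.le)
    have hIVT := intermediate_value_Icc' hs.2 (hcont.mono hsub')
    have : l * K ∈ Icc (U s₂) (U s) := ⟨hUs₂.trans hKlK.le, h.le⟩
    obtain ⟨s', hs', hUs'⟩ := hIVT this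
    have : s' ∈ S₁ := ⟨⟨hs₁₀.trans (hs.1.le.trans hs'.1), hs'.2⟩, hUs'.ge⟩
    exact absurd (le_csSup hS₁bdd this) (not_le.mpr (hs.1.trans_le hs'.1))
  -- monotonicity of g s = U s + c * s on [s₁, s₂]
  set c : ℝ := C₀ + lam * (l * K) with hcdef
  have hc : 0 < c := by positivity
  set g : ℝ → ℝ := fun s => U s + c * s with hgdef
  have hIccsub : Icc s₁ s₂ ⊆ Icc (0:ℝ) t :=
    Icc_subset_Icc (hs₀0.trans hs₁₀) hs₂t
  have hgderiv : ∀ s ∈ Icc s₁ s₂, HasDerivAt g (L (X s) (U s) (X' s) + c) s := by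
    intro s hs
    exact ((hU s (hIccsub hs)).add ((hasDerivAt_id s).const_mul c)).congr_deriv (by simp)
  have hmono : MonotoneOn g (Icc s₁ s₂) := by
    apply monotoneOn_of_deriv_nonneg (convex_Icc _ _)
      (fun s hs => (hgderiv s hs).continuousAt.continuousWithinAt)
    · intro s hs
      rw [interior_Icc] at hs
      exact (hgderiv s (Ioo_subset_Icc_self hs)).differentiableAt.differentiableWithinAt
    · intro s hs
      rw [interior_Icc] at hs
      rw [(hgderiv s (Ioo_subset_Icc_self hs)).deriv]
      have h1 : K < U s := hgtK s ⟨hs₁₀.trans hs.1.le, hs.2⟩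
      have h2 : U s ≤ l * K := hlelK s ⟨hs.1, hs.2.le⟩
      have habs : |U s| ≤ l * K := by
        rw [abs_le]; constructor <;> nlinarith
      have := hL (X s) (U s) (X' s)
      nlinarith
  have hkey := hmono (left_mem_Icc.mpr hs₁₂) (right_mem_Icc.mpr hs₁₂) hs₁₂
  simp only [hgdef] at hkey
  -- conclude
  have hs₂₁ : s₂ - s₁ ≤ 1 / (2 * lam) := by
    have : s₂ - s₁ ≤ t := by
      have : 0 ≤ s₁ := hs₀0.trans hs₁₀
      linarith
    linarith
  have hmain : l * K - K ≤ c * (s₂ - s₁) := by nlinarith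
  have hcs : c * (s₂ - s₁) ≤ c * (1 / (2 * lam)) :=
    mul_le_mul_of_nonneg_left hs₂₁ hc.le
  have hfin : l * K - K ≤ C₀ / (2 * lam) + l * K / 2 := by
    have h2lam : (0:ℝ) < 2 * lam := by positivity
    rw [hcdef] at hcs
    have : (C₀ + lam * (l * K)) * (1 / (2 * lam)) = C₀ / (2 * lam) + l * K / 2 := by
      field_simp
    linarith [hmain.trans hcs, this ▸ hcs]
  -- l ≤ 2 + C₀/(lam K), contradicting l > 2(1 + C₀/(2 lam K))
  have hexp : 2 * (1 + C₀ / (2 * lam * K)) = 2 + C₀ / (lam * K) := by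
    field_simp
  rw [hexp] at hl
  have : C₀ / (2 * lam) = (C₀ / (lam * K)) * K / 2 := by field_simp
  nlinarith [hl, hK, div_pos hC₀ (by positivity : (0:ℝ) < lam * K)]
end
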